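/- arXiv:1105.4405 — 5 statements merged into one kernel-verified Lean document; each statement's English description precedes it below -/
import Mathlib

section
/- The relation ≼ defined on pairs (A,B) with A ⊆ X, B ⊆ Y, and A ↠ B by: (A,B) ≼ (C,D) if and only if |A| - |B| = |C| - |D| and (B ∪ C) ↠ (A ∪ D), is a partial order (reflexive, antisymmetric, transitive). -/
open scoped Classical

/-- For finite subsets of a linear order, `ontoC A B` (written `A ↠ B` for
disjoint `A`, `B`) means every prefix count of `A` is at least that of `B`. -/
def ontoC {U : Type*} [LinearOrder U] (A B : Finset U) : Prop :=
  ∀ n : U, (B.filter (· ≤ n)).card ≤ (A.filter (· ≤ n)).card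

/-- For not-necessarily-disjoint `S`, `T`, `S ↠ T` means `(S \ T) ↠ (T \ S)`. -/
def ontoN {U : Type*} [LinearOrder U] (S T : Finset U) : Prop :=
  ontoC (S \ T) (T \ S)

/-- The relation `≼` on pairs `(A, B)` with `A ⊆ X`, `B ⊆ Y`, `A ↠ B`. -/
def preceq {U : Type*} [LinearOrder U] (p q : Finset U × Finset U) : Prop :=
  (p.1.card : ℤ) - p.2.card = (q.1.card : ℤ) - q.2.card ∧ ontoN (p.2 ∪ q.1) (p.1 ∪ q.2)


lemma sdiff_count {U : Type*} [LinearOrder U] (S T : Finset U) (n : U) :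
    (((S \ T).filter (· ≤ n)).card : ℤ) - (((T \ S).filter (· ≤ n)).card : ℤ)
      = ((S.filter (· ≤ n)).card : ℤ) - ((T.filter (· ≤ n)).card : ℤ) := by
  have hs : (S.filter (· ≤ n)).card
      = ((S \ T).filter (· ≤ n)).card + ((S ∩ T).filter (· ≤ n)).card := by
    rw [← Finset.card_union_of_disjoint
      (Finset.disjoint_filter_filter (Finset.disjoint_sdiff_inter S T)),
      ← Finset.filter_union, Finset.sdiff_union_inter]
  have ht : (T.filter (· ≤ n)).card
      = ((T \ S).filter (· ≤ n)).card + ((T ∩ S).filter (· ≤ n)).card := by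
    rw [← Finset.card_union_of_disjoint
      (Finset.disjoint_filter_filter (Finset.disjoint_sdiff_inter T S)),
      ← Finset.filter_union, Finset.sdiff_union_inter]
  rw [Finset.inter_comm T S] at ht
  omega

lemma ontoN_iff {U : Type*} [LinearOrder U] (S T : Finset U) :
    ontoN S T ↔ ∀ n, ((T.filter (· ≤ n)).card : ℤ) ≤ ((S.filter (· ≤ n)).card : ℤ) := by
  constructor <;> intro h n <;> have h2 := sdiff_count S T n <;> have h1 := h n <;> omega

lemma union_count {U : Type*} [LinearOrder U] {S T : Finset U} (h : Disjoint S T) (n : U) :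
    ((S ∪ T).filter (· ≤ n)).card = (S.filter (· ≤ n)).card + (T.filter (· ≤ n)).card := by
  rw [Finset.filter_union, Finset.card_union_of_disjoint (Finset.disjoint_filter_filter h)]

lemma max'_le_aux {U : Type*} [LinearOrder U] {S T : Finset U} (hS : S.Nonempty) (hT : T.Nonempty)
    (h : ∀ n, (S.filter (· ≤ n)).card = (T.filter (· ≤ n)).card) :
    T.max' hT ≤ S.max' hS := by
  by_contra hc
  push_neg at hc
  have hcard : S.card = T.card := by
    have := h (max (S.max' hS) (T.max' hT))
    rwa [Finset.filter_eq_self.2 (fun x hx => le_trans (S.le_max' x hx) (le_max_left _ _)),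
      Finset.filter_eq_self.2 (fun x hx => le_trans (T.le_max' x hx) (le_max_right _ _))] at this
  have h1 : S.filter (· ≤ S.max' hS) = S :=
    Finset.filter_eq_self.2 (fun x hx => S.le_max' x hx)
  have h2 : (T.filter (· ≤ S.max' hS)).card < T.card := by
    apply Finset.card_lt_card
    refine ⟨Finset.filter_subset _ _, fun hsub => ?_⟩
    have := hsub (T.max'_mem hT)
    rw [Finset.mem_filter] at this
    exact absurd this.2 (not_le.2 hc)
  have := h (S.max' hS)
  rw [h1] at this
  omega

lemma eq_of_count_eq {U : Type*} [LinearOrder U] :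
    ∀ (k : ℕ) (S T : Finset U), S.card = k →
      (∀ n, (S.filter (· ≤ n)).card = (T.filter (· ≤ n)).card) → S = T := by
  intro k
  induction k with
  | zero =>
    intro S T hk h
    have hS : S = ∅ := Finset.card_eq_zero.1 hk
    subst hS
    by_contra hne
    obtain ⟨t, ht⟩ := Finset.nonempty_of_ne_empty (Ne.symm hne)
    have := h t
    simp only [Finset.filter_empty, Finset.card_empty] at this
    have : t ∈ T.filter (· ≤ t) := Finset.mem_filter.2 ⟨ht, le_refl t⟩
    have := Finset.card_pos.2 ⟨t, this⟩
    omega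
  | succ k ih =>
    intro S T hk h
    have hS : S.Nonempty := Finset.card_pos.1 (by omega)
    have hT : T.Nonempty := by
      have := h (S.max' hS)
      have hm : S.max' hS ∈ S.filter (· ≤ S.max' hS) :=
        Finset.mem_filter.2 ⟨S.max'_mem hS, le_refl _⟩
      have h1 := Finset.card_pos.2 ⟨_, hm⟩
      have h2 : 0 < (T.filter (· ≤ S.max' hS)).card := by omega
      exact ⟨_, Finset.filter_subset _ _ (Finset.card_pos.1 h2).choose_spec⟩
    have hmm : S.max' hS = T.max' hT :=
      le_antisymm (max'_le_aux hT hS (fun n => (h n).symm)) (max'_le_aux hS hT h)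
    set m := S.max' hS with hmdef
    have hmS : m ∈ S := S.max'_mem hS
    have hmT : m ∈ T := hmm ▸ T.max'_mem hT
    have key : ∀ n, ((S.erase m).filter (· ≤ n)).card = ((T.erase m).filter (· ≤ n)).card := by
      intro n
      rw [Finset.filter_erase, Finset.filter_erase]
      by_cases hmn : m ≤ n
      · have e1 : m ∈ S.filter (· ≤ n) := Finset.mem_filter.2 ⟨hmS, hmn⟩
        have e2 : m ∈ T.filter (· ≤ n) := Finset.mem_filter.2 ⟨hmT, hmn⟩
        rw [Finset.card_erase_of_mem e1, Finset.card_erase_of_mem e2, h n]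
      · rw [Finset.erase_eq_of_notMem (by simp [hmn]),
          Finset.erase_eq_of_notMem (by simp [hmn]), h n]
    have hcard : (S.erase m).card = k := by
      rw [Finset.card_erase_of_mem hmS]; omega
    have := ih (S.erase m) (T.erase m) hcard key
    have h1 : S = insert m (S.erase m) := (Finset.insert_erase hmS).symm
    have h2 : T = insert m (T.erase m) := (Finset.insert_erase hmT).symm
    rw [h1, h2, this]

lemma union_parts {U : Type*} [LinearOrder U] {X Y A B C D : Finset U} (hXY : Disjoint X Y)
    (hA : A ⊆ X) (hB : B ⊆ Y) (hC : C ⊆ X) (hD : D ⊆ Y) (h : A ∪ D = B ∪ C) :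
    A = C ∧ B = D := by
  have hDX : D ∩ X = ∅ := Finset.disjoint_iff_inter_eq_empty.1 (hXY.symm.mono hD (le_refl X))
  have hBX : B ∩ X = ∅ := Finset.disjoint_iff_inter_eq_empty.1 (hXY.symm.mono hB (le_refl X))
  have hAY : A ∩ Y = ∅ := Finset.disjoint_iff_inter_eq_empty.1 (hXY.mono hA (le_refl Y))
  have hCY : C ∩ Y = ∅ := Finset.disjoint_iff_inter_eq_empty.1 (hXY.mono hC (le_refl Y))
  constructor
  · have := congrArg (· ∩ X) h
    simpa [Finset.union_inter_distrib_right, hDX, hBX,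
      Finset.inter_eq_left.2 hA, Finset.inter_eq_left.2 hC] using this
  · have := congrArg (· ∩ Y) h
    have h2 : A ∩ Y ∪ D ∩ Y = B ∩ Y ∪ C ∩ Y := by
      simpa [Finset.union_inter_distrib_right] using this
    rw [hAY, hCY, Finset.inter_eq_left.2 hB, Finset.inter_eq_left.2 hD] at h2
    simpa using h2.symm

/-- The relation `≼` is a partial order on
`{(A, B) : A ⊆ X, B ⊆ Y, A ↠ B}`, for `X`, `Y` nonempty disjoint finite sets. -/
theorem preceq_partialOrder {U : Type*} [LinearOrder U] (X Y : Finset U)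
    (hX : X.Nonempty) (hY : Y.Nonempty) (hXY : Disjoint X Y)
    (P : Set (Finset U × Finset U))
    (hP : P = {p | p.1 ⊆ X ∧ p.2 ⊆ Y ∧ ontoC p.1 p.2}) :
    (∀ p ∈ P, preceq p p) ∧
    (∀ p ∈ P, ∀ q ∈ P, preceq p q → preceq q p → p = q) ∧
    (∀ p ∈ P, ∀ q ∈ P, ∀ r ∈ P, preceq p q → preceq q r → preceq p r) := by
  subst hP
  refine ⟨?_, ?_, ?_⟩
  · intro p _
    refine ⟨rfl, ?_⟩
    rw [Finset.union_comm p.2 p.1]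
    unfold ontoN
    simp only [Finset.sdiff_self]
    intro n; exact le_refl _
  · rintro ⟨A, B⟩ ⟨hA, hB, -⟩ ⟨C, D⟩ ⟨hC, hD, -⟩ ⟨-, h1⟩ ⟨-, h2⟩
    simp only at h1 h2 hA hB hC hD
    rw [ontoN_iff] at h1 h2
    rw [Finset.union_comm D A, Finset.union_comm C B] at h2
    have heq : ∀ n, (((A ∪ D).filter (· ≤ n)).card : ℕ)
        = (((B ∪ C).filter (· ≤ n)).card : ℕ) := by
      intro n
      have := h1 n; have := h2 n
      omega
    have hU : A ∪ D = B ∪ C := eq_of_count_eq (A ∪ D).card _ _ rfl heq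
    obtain ⟨hAC, hBD⟩ := union_parts hXY hA hB hC hD hU
    simp [Prod.ext_iff, hAC, hBD]
  · rintro ⟨A, B⟩ ⟨hA, hB, -⟩ ⟨C, D⟩ ⟨hC, hD, -⟩ ⟨E, F⟩ ⟨hE, hF, -⟩ ⟨hn1, h1⟩ ⟨hn2, h2⟩
    dsimp only at h1 h2 hn1 hn2 hA hB hC hD hE hF ⊢
    refine ⟨by dsimp only; omega, ?_⟩
    dsimp only
    rw [ontoN_iff] at h1 h2 ⊢
    intro n
    have e1 := union_count (hXY.symm.mono hB hC) n
    have e2 := union_count (hXY.mono hA hD) n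
    have e3 := union_count (hXY.symm.mono hD hE) n
    have e4 := union_count (hXY.mono hC hF) n
    have e5 := union_count (hXY.symm.mono hB hE) n
    have e6 := union_count (hXY.mono hA hF) n
    have := h1 n; have := h2 n
    omega
end

section
/- If A, C, E ⊆ X and B, D, F ⊆ Y with X, Y disjoint, and (B ∪ C) ↠ (A ∪ D) and (D ∪ E) ↠ (C ∪ F), then (B ∪ E) ↠ (A ∪ F). -/
open scoped Classical

/-- If `A, C, E ⊆ X` and `B, D, F ⊆ Y` with `X`, `Y` disjoint, and
`(B ∪ C) ↠ (A ∪ D)` and `(D ∪ E) ↠ (C ∪ F)`, then `(B ∪ E) ↠ (A ∪ F)`. -/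
theorem onto_trans {U : Type*} [LinearOrder U] (X Y A B C D E F : Finset U)
    (hXY : Disjoint X Y)
    (hA : A ⊆ X) (hC : C ⊆ X) (hE : E ⊆ X)
    (hB : B ⊆ Y) (hD : D ⊆ Y) (hF : F ⊆ Y)
    (h1 : ontoC (B ∪ C) (A ∪ D)) (h2 : ontoC (D ∪ E) (C ∪ F)) :
    ontoC (B ∪ E) (A ∪ F) := by
  intro n
  have key : ∀ S T : Finset U, S ⊆ X → T ⊆ Y →
      ((S ∪ T).filter (· ≤ n)).card = (S.filter (· ≤ n)).card + (T.filter (· ≤ n)).card := by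
    intro S T hS hT
    rw [Finset.filter_union, Finset.card_union_of_disjoint]
    exact Finset.disjoint_filter_filter
      (hXY.mono hS hT)
  have e1 := h1 n
  have e2 := h2 n
  rw [key A F hA hF, Finset.union_comm B E, key E B hE hB]
  rw [Finset.union_comm B C, key C B hC hB, key A D hA hD] at e1
  rw [Finset.union_comm D E, key E D hE hD, key C F hC hF] at e2
  omega
end

section
/- If the partition λ is obtained from the partition τ by the elementary Jantzen move λ → τ, then λ strictly dominates τ. -/
open scoped Classical

/-- A partition, given by its weakly decreasing sequence of parts
`part 0 ≥ part 1 ≥ …` (0-indexed; `part i = λ_{i+1}`), eventually zero. -/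
structure PartitionSeq where
  part : ℕ → ℕ
  antitone' : ∀ i j : ℕ, i ≤ j → part j ≤ part i
  finite' : ∃ N : ℕ, ∀ i : ℕ, N ≤ i → part i = 0

/-- The number of (nonzero) parts `l(λ)`. -/
noncomputable def PartitionSeq.len (l : PartitionSeq) : ℕ := sInf {N | ∀ i : ℕ, N ≤ i → l.part i = 0}

/-- The β-set of `λ` of size `t` (for `t ≥ l(λ)`):
`B_t(λ) = {λ_i + t − i : 1 ≤ i ≤ t}` (with `λ_i = 0` for `i > l(λ)`). -/
def betaSet (l : PartitionSeq) (t : ℕ) : Finset ℕ :=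
  (Finset.range t).image (fun i => l.part i + (t - 1 - i))

/-- The sum of the first `k` parts of `λ`. -/
def psum (l : PartitionSeq) (k : ℕ) : ℕ := ∑ i ∈ Finset.range k, l.part i

/-- `μ` dominates `ν`: they are partitions of the same number and every
partial sum of `μ` is at least the corresponding partial sum of `ν`. -/
def dominates (μ ν : PartitionSeq) : Prop :=
  psum μ μ.len = psum ν ν.len ∧ ∀ k : ℕ, psum ν k ≤ psum μ k

/-- The elementary Jantzen move `λ → τ` (with respect to `e`). -/
def jantzenMove (e : ℕ) (l τ : PartitionSeq) : Prop :=
  ∃ a b i t : ℕ, l.len ≤ t ∧ τ.len ≤ t ∧ b < a ∧ i * e ≤ b ∧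
    a ≠ b - i * e ∧ a ∈ betaSet l t ∧ b - i * e ∈ betaSet l t ∧
    b ≠ a - i * e ∧ b ∉ betaSet l t ∧ a - i * e ∉ betaSet l t ∧
    betaSet τ t = (betaSet l t ∪ {b, a - i * e}) \ {a, b - i * e}

/-! ### Auxiliary machinery -/

/-- `cnt S j` is the number of elements of `S` that exceed `j`. -/
noncomputable def JMaux.cnt (S : Finset ℕ) (j : ℕ) : ℕ := (S.filter (fun y => j < y)).card

namespace JMaux

lemma cnt_le (S : Finset ℕ) (j : ℕ) : cnt S j ≤ S.card :=
  Finset.card_le_card (Finset.filter_subset _ _)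

lemma cnt_mono (S : Finset ℕ) (j1 j2 : ℕ) (h : j1 ≤ j2) : cnt S j2 ≤ cnt S j1 := by
  apply Finset.card_le_card
  intro y hy
  simp only [Finset.mem_filter] at hy ⊢
  exact ⟨hy.1, by omega⟩

lemma filter_lt_card (M x : ℕ) :
    ((Finset.range M).filter (fun j => j < x)).card = min M x := by
  have h : (Finset.range M).filter (fun j => j < x) = Finset.range (min M x) := by
    ext j; simp only [Finset.mem_filter, Finset.mem_range, lt_min_iff]
  rw [h, Finset.card_range]

lemma cnt_pair (x y j : ℕ) (hxy : x ≠ y) :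
    cnt {x, y} j = (if j < x then 1 else 0) + (if j < y then 1 else 0) := by
  unfold cnt
  rw [Finset.filter_insert, Finset.filter_singleton]
  split_ifs <;> simp_all [Finset.card_insert_of_notMem]

lemma cnt_union (S T : Finset ℕ) (h : Disjoint S T) (j : ℕ) :
    cnt (S ∪ T) j = cnt S j + cnt T j := by
  unfold cnt
  rw [Finset.filter_union, Finset.card_union_of_disjoint]
  exact Finset.disjoint_filter_filter h

/-- The sum of the `k` largest elements of the image of a strictly decreasing
sequence, expressed via threshold counts. -/
lemma topsum (b : ℕ → ℕ) (t k M : ℕ) (hk : k ≤ t)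
    (hb : ∀ i j, i < j → j < t → b j < b i)
    (hM : ∀ i, i < t → b i ≤ M) :
    ∑ i ∈ Finset.range k, b i
      = ∑ j ∈ Finset.range M, min k (cnt ((Finset.range t).image b) j) := by
  have hinj : Set.InjOn b (Finset.range t) := by
    intro x hx y hy hxy
    simp only [Finset.coe_range, Set.mem_Iio] at hx hy
    rcases lt_trichotomy x y with h | h | h
    · exact absurd hxy.symm (Nat.ne_of_lt (hb x y h hy))
    · exact h
    · exact absurd hxy (Nat.ne_of_lt (hb y x h hx))
  have hcard : ∀ j, cnt ((Finset.range t).image b) j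
      = ((Finset.range t).filter (fun i => j < b i)).card := by
    intro j
    unfold cnt
    rw [Finset.filter_image]
    exact Finset.card_image_of_injOn (hinj.mono (by exact_mod_cast Finset.filter_subset _ _))
  have key : ∀ j, ∀ i, i < t →
      (j < b i ↔ i < ((Finset.range t).filter (fun i => j < b i)).card) := by
    intro j i hi
    constructor
    · intro hji
      have hsub : Finset.range (i + 1) ⊆ (Finset.range t).filter (fun i' => j < b i') := by
        intro i' hi'
        simp only [Finset.mem_range] at hi'
        simp only [Finset.mem_filter, Finset.mem_range]
        refine ⟨by omega, ?_⟩
        rcases Nat.lt_or_ge i' i with h | h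
        · exact lt_trans hji (hb i' i h hi)
        · have : i' = i := by omega
          rw [this]; exact hji
      have := Finset.card_le_card hsub
      simpa using this
    · intro hcard'
      by_contra hji
      push_neg at hji
      have hsub : (Finset.range t).filter (fun i' => j < b i') ⊆ Finset.range i := by
        intro i' hi'
        simp only [Finset.mem_filter, Finset.mem_range] at hi'
        simp only [Finset.mem_range]
        by_contra hge
        push_neg at hge
        rcases Nat.lt_or_ge i i' with h | h
        · exact absurd hi'.2 (by have := hb i i' h hi'.1; omega)
        · have : i = i' := by omega
          subst this; omega
      have := Finset.card_le_card hsub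
      simp only [Finset.card_range] at this
      omega
  have hmin : ∀ j, min k (cnt ((Finset.range t).image b) j)
      = ((Finset.range k).filter (fun i => j < b i)).card := by
    intro j
    rw [hcard]
    have : (Finset.range k).filter (fun i => j < b i)
        = Finset.range (min k (((Finset.range t).filter (fun i => j < b i)).card)) := by
      ext x
      simp only [Finset.mem_filter, Finset.mem_range, lt_min_iff]
      constructor
      · rintro ⟨hx, hj⟩
        exact ⟨hx, (key j x (lt_of_lt_of_le hx hk)).1 hj⟩
      · rintro ⟨hx, hc⟩
        exact ⟨hx, (key j x (lt_of_lt_of_le hx hk)).2 hc⟩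
    rw [this, Finset.card_range]
  calc ∑ i ∈ Finset.range k, b i
      = ∑ i ∈ Finset.range k, min M (b i) := by
        apply Finset.sum_congr rfl
        intro i hi
        simp only [Finset.mem_range] at hi
        exact (min_eq_right (hM i (lt_of_lt_of_le hi hk))).symm
    _ = ∑ i ∈ Finset.range k, ((Finset.range M).filter (fun j => j < b i)).card := by
        simp [filter_lt_card]
    _ = ∑ i ∈ Finset.range k, ∑ j ∈ Finset.range M, (if j < b i then 1 else 0) :=
        Finset.sum_congr rfl fun i _ => Finset.card_filter _ _
    _ = ∑ j ∈ Finset.range M, ∑ i ∈ Finset.range k, (if j < b i then 1 else 0) :=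
        Finset.sum_comm
    _ = ∑ j ∈ Finset.range M, ((Finset.range k).filter (fun i => j < b i)).card :=
        Finset.sum_congr rfl fun j _ => (Finset.card_filter _ _).symm
    _ = ∑ j ∈ Finset.range M, min k (cnt ((Finset.range t).image b) j) := by
        simp [hmin]

/-- The key inequality: the swapped β-set has smaller top-`k` count sums. -/
lemma key_ineq (B B' : Finset ℕ) (a b c M k : ℕ)
    (hba : b < a) (hcb : c ≤ b) (hc1 : 1 ≤ c) (hMa : a ≤ M)
    (star : ∀ j, cnt B' j + ((if j < a then 1 else 0) + (if j < b - c then 1 else 0))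
      = cnt B j + ((if j < b then 1 else 0) + (if j < a - c then 1 else 0))) :
    ∑ j ∈ Finset.range M, min k (cnt B' j)
      ≤ ∑ j ∈ Finset.range M, min k (cnt B j) := by
  set m1 := min b (a - c) with hm1
  set m2 := max b (a - c) with hm2
  have hbc_m1 : b - c ≤ m1 := by omega
  have h12 : m1 ≤ m2 := by omega
  have h2a : m2 ≤ a := by omega
  have decomp : ∀ F : ℕ → ℕ, ∑ j ∈ Finset.range M, F j
      = (∑ j ∈ Finset.Ico 0 (b - c), F j) + (∑ j ∈ Finset.Ico (b - c) m1, F j)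
        + (∑ j ∈ Finset.Ico m1 m2, F j) + (∑ j ∈ Finset.Ico m2 a, F j)
        + (∑ j ∈ Finset.Ico a M, F j) := by
    intro F
    have e1 := Finset.sum_Ico_consecutive F (Nat.zero_le (b - c)) hbc_m1
    have e2 := Finset.sum_Ico_consecutive F (Nat.zero_le m1) h12
    have e3 := Finset.sum_Ico_consecutive F (Nat.zero_le m2) h2a
    have e4 := Finset.sum_Ico_consecutive F (Nat.zero_le a) hMa
    rw [Finset.range_eq_Ico]
    omega
  rw [decomp, decomp]
  have r1 : ∑ j ∈ Finset.Ico 0 (b - c), min k (cnt B' j)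
      = ∑ j ∈ Finset.Ico 0 (b - c), min k (cnt B j) := by
    refine Finset.sum_congr rfl fun j hj => ?_
    have hj' := Finset.mem_Ico.mp hj
    have hs := star j
    have : cnt B' j = cnt B j := by split_ifs at hs <;> omega
    rw [this]
  have r3 : ∑ j ∈ Finset.Ico m1 m2, min k (cnt B' j)
      = ∑ j ∈ Finset.Ico m1 m2, min k (cnt B j) := by
    refine Finset.sum_congr rfl fun j hj => ?_
    have hj' := Finset.mem_Ico.mp hj
    have hs := star j
    have : cnt B' j = cnt B j := by split_ifs at hs <;> omega
    rw [this]
  have r5 : ∑ j ∈ Finset.Ico a M, min k (cnt B' j)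
      = ∑ j ∈ Finset.Ico a M, min k (cnt B j) := by
    refine Finset.sum_congr rfl fun j hj => ?_
    have hj' := Finset.mem_Ico.mp hj
    have hs := star j
    have : cnt B' j = cnt B j := by split_ifs at hs <;> omega
    rw [this]
  have r24 : (∑ j ∈ Finset.Ico (b - c) m1, min k (cnt B' j))
        + (∑ j ∈ Finset.Ico m2 a, min k (cnt B' j))
      ≤ (∑ j ∈ Finset.Ico (b - c) m1, min k (cnt B j))
        + (∑ j ∈ Finset.Ico m2 a, min k (cnt B j)) := by
    rw [Finset.sum_Ico_eq_sum_range, Finset.sum_Ico_eq_sum_range,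
      Finset.sum_Ico_eq_sum_range, Finset.sum_Ico_eq_sum_range]
    have hlen : m1 - (b - c) = a - m2 := by omega
    rw [hlen, ← Finset.sum_add_distrib, ← Finset.sum_add_distrib]
    apply Finset.sum_le_sum
    intro s hs
    simp only [Finset.mem_range] at hs
    have h1 := star (b - c + s)
    have h2 := star (m2 + s)
    have hmn := cnt_mono B (b - c + s) (m2 + s) (by omega)
    split_ifs at h1 h2 <;> omega
  omega

end JMaux

lemma PartitionSeq.part_eq_zero (l : PartitionSeq) {i : ℕ} (h : l.len ≤ i) : l.part i = 0 := by
  have hne : {N | ∀ i : ℕ, N ≤ i → l.part i = 0}.Nonempty := l.finite'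
  exact Nat.sInf_mem hne i h

lemma psum_stable (l : PartitionSeq) {k : ℕ} (h : l.len ≤ k) : psum l k = psum l l.len := by
  unfold psum
  rw [Finset.range_eq_Ico, ← Finset.sum_Ico_consecutive _ (Nat.zero_le l.len) h]
  have h0 : ∑ i ∈ Finset.Ico l.len k, l.part i = 0 :=
    Finset.sum_eq_zero fun i hi => l.part_eq_zero (Finset.mem_Ico.mp hi).1
  rw [h0, add_zero, Finset.range_eq_Ico]

lemma blam_anti (p : PartitionSeq) (t : ℕ) : ∀ i j, i < j → j < t →
    p.part j + (t - 1 - j) < p.part i + (t - 1 - i) := by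
  intro i j hij hjt
  have := p.antitone' i j (le_of_lt hij)
  omega

lemma betaSet_card (p : PartitionSeq) (t : ℕ) : (betaSet p t).card = t := by
  unfold betaSet
  rw [Finset.card_image_of_injOn, Finset.card_range]
  intro x hx y hy hxy
  simp only [Finset.coe_range, Set.mem_Iio] at hx hy
  rcases lt_trichotomy x y with h | h | h
  · exact absurd hxy.symm (Nat.ne_of_lt (blam_anti p t x y h hy))
  · exact h
  · exact absurd hxy (Nat.ne_of_lt (blam_anti p t y x h hx))

open JMaux in
/-- If `λ → τ` is an elementary Jantzen move then `λ` strictly dominates `τ`. -/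
theorem jantzenMove_strict_dominates (e : ℕ) (he : 2 ≤ e) (l τ : PartitionSeq)
    (h : jantzenMove e l τ) : dominates l τ ∧ l ≠ τ := by
  obtain ⟨a, b, i, t, hlt, hτt, hba, hcb, hane, haB, hbcB, hbne, hbB, hacB, hBeq⟩ := h
  set c := i * e with hc
  have hc1 : 1 ≤ c := by
    rcases Nat.eq_zero_or_pos c with h0 | h0
    · exfalso; apply hacB; rw [h0, Nat.sub_zero]; exact haB
    · exact h0
  -- the counting identity relating the two β-sets
  have hd2 : Disjoint (betaSet l t) {b, a - c} := by
    rw [Finset.disjoint_right]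
    intro x hx
    simp only [Finset.mem_insert, Finset.mem_singleton] at hx
    rcases hx with rfl | rfl
    · exact hbB
    · exact hacB
  have hPX : ({a, b - c} : Finset ℕ) ⊆ betaSet l t ∪ {b, a - c} := by
    intro x hx
    simp only [Finset.mem_insert, Finset.mem_singleton] at hx
    rcases hx with rfl | rfl
    · exact Finset.mem_union_left _ haB
    · exact Finset.mem_union_left _ hbcB
  have hd1 : Disjoint (betaSet τ t) {a, b - c} := by
    rw [hBeq]; exact Finset.sdiff_disjoint
  have hXU : betaSet τ t ∪ {a, b - c} = betaSet l t ∪ {b, a - c} := by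
    rw [hBeq]; exact Finset.sdiff_union_of_subset hPX
  have star : ∀ j, cnt (betaSet τ t) j
        + ((if j < a then 1 else 0) + (if j < b - c then 1 else 0))
      = cnt (betaSet l t) j
        + ((if j < b then 1 else 0) + (if j < a - c then 1 else 0)) := by
    intro j
    have h1 := cnt_union (betaSet τ t) {a, b - c} hd1 j
    have h2 := cnt_union (betaSet l t) {b, a - c} hd2 j
    rw [hXU] at h1
    rw [cnt_pair _ _ _ hane] at h1
    rw [cnt_pair _ _ _ hbne] at h2
    omega
  -- a common upper bound
  set M := a + 1 + ∑ i' ∈ Finset.range t, (l.part i' + τ.part i' + t) with hMdef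
  have hMa : a ≤ M := by omega
  have hMl : ∀ i', i' < t → l.part i' + (t - 1 - i') ≤ M := by
    intro i' hi'
    have := Finset.single_le_sum
      (f := fun i' => l.part i' + τ.part i' + t)
      (fun _ _ => Nat.zero_le _) (Finset.mem_range.mpr hi')
    omega
  have hMτ : ∀ i', i' < t → τ.part i' + (t - 1 - i') ≤ M := by
    intro i' hi'
    have := Finset.single_le_sum
      (f := fun i' => l.part i' + τ.part i' + t)
      (fun _ _ => Nat.zero_le _) (Finset.mem_range.mpr hi')
    omega
  -- top-sum formulas
  have topl : ∀ k, k ≤ t → psum l k + (∑ i' ∈ Finset.range k, (t - 1 - i'))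
      = ∑ j ∈ Finset.range M, min k (cnt (betaSet l t) j) := by
    intro k hk
    rw [psum, ← Finset.sum_add_distrib]
    exact topsum _ t k M hk (blam_anti l t) hMl
  have topτ : ∀ k, k ≤ t → psum τ k + (∑ i' ∈ Finset.range k, (t - 1 - i'))
      = ∑ j ∈ Finset.range M, min k (cnt (betaSet τ t) j) := by
    intro k hk
    rw [psum, ← Finset.sum_add_distrib]
    exact topsum _ t k M hk (blam_anti τ t) hMτ
  -- partial sums inequality for k ≤ t
  have hkey : ∀ k, k ≤ t → psum τ k ≤ psum l k := by
    intro k hk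
    have h1 := topl k hk
    have h2 := topτ k hk
    have h3 := key_ineq (betaSet l t) (betaSet τ t) a b c M k hba hcb hc1 hMa star
    omega
  -- equality of totals
  have hEq : psum τ t = psum l t := by
    have hsum : ∑ j ∈ Finset.range M,
          (cnt (betaSet τ t) j + ((if j < a then 1 else 0) + (if j < b - c then 1 else 0)))
        = ∑ j ∈ Finset.range M,
          (cnt (betaSet l t) j + ((if j < b then 1 else 0) + (if j < a - c then 1 else 0))) :=
      Finset.sum_congr rfl fun j _ => star j
    have hif : ∀ x, x ≤ M → ∑ j ∈ Finset.range M, (if j < x then 1 else 0) = x := by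
      intro x hx
      rw [← Finset.card_filter, filter_lt_card]
      omega
    rw [Finset.sum_add_distrib, Finset.sum_add_distrib, Finset.sum_add_distrib,
      Finset.sum_add_distrib, hif a (by omega), hif (b - c) (by omega),
      hif b (by omega), hif (a - c) (by omega)] at hsum
    have hcnt_eq : ∑ j ∈ Finset.range M, cnt (betaSet τ t) j
        = ∑ j ∈ Finset.range M, cnt (betaSet l t) j := by omega
    have hminl : ∀ j, min t (cnt (betaSet l t) j) = cnt (betaSet l t) j := by
      intro j
      have := cnt_le (betaSet l t) j
      rw [betaSet_card] at this
      omega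
    have hminτ : ∀ j, min t (cnt (betaSet τ t) j) = cnt (betaSet τ t) j := by
      intro j
      have := cnt_le (betaSet τ t) j
      rw [betaSet_card] at this
      omega
    have h1 := topl t le_rfl
    have h2 := topτ t le_rfl
    simp only [hminl] at h1
    simp only [hminτ] at h2
    omega
  refine ⟨⟨?_, ?_⟩, ?_⟩
  · rw [← psum_stable l hlt, ← psum_stable τ hτt, hEq]
  · intro k
    rcases le_or_gt k t with hk | hk
    · exact hkey k hk
    · have h1 : psum τ k = psum τ τ.len := psum_stable τ (by omega)
      have h2 : psum l k = psum l l.len := psum_stable l (by omega)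
      have h3 := psum_stable τ hτt
      have h4 := psum_stable l hlt
      omega
  · intro heq
    rw [heq] at haB
    rw [hBeq] at haB
    simp [Finset.mem_sdiff] at haB
end

section
/- A ↠ B (every element of B is paired under π_{A→B}) holds if and only if for every n, |{a ∈ A : a ≤ n}| ≥ |{b ∈ B : b ≤ n}|. -/
open scoped Classical



/-- For disjoint `A`, `B`, `pairsWith A B x y` says that in the lattice path
`Γ(A→B)` (elements of `A` as up-steps, of `B` as down-steps, in increasing
order), the up-step at `x ∈ A` is paired to the down-step at `y ∈ B`, i.e. `y`
is the least element of `B` exceeding `x` with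
`|{a ∈ A : x ≤ a < y}| = |{b ∈ B : x < b ≤ y}|` (the next down-step to the
right at the same level).  (Elements of `A ∩ B` are paired with themselves,
for the extension to not-necessarily-disjoint sets.) -/
def pairsWith {U : Type*} [LinearOrder U] (A B : Finset U) (x y : U) : Prop :=
  (x ∈ A ∩ B ∧ y = x) ∨
  (x ∈ A \ B ∧ y ∈ B \ A ∧ x < y ∧
    ((A \ B).filter (fun t => x ≤ t ∧ t < y)).card
      = ((B \ A).filter (fun t => x < t ∧ t ≤ y)).card ∧
    ∀ y' ∈ B \ A, x < y' →
      ((A \ B).filter (fun t => x ≤ t ∧ t < y')).card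
        = ((B \ A).filter (fun t => x < t ∧ t ≤ y')).card → y ≤ y')



namespace OntoAux

variable {U : Type*} [LinearOrder U]

noncomputable def hgt (A B : Finset U) (n : U) : ℤ :=
  ((A.filter (· ≤ n)).card : ℤ) - ((B.filter (· ≤ n)).card : ℤ)

lemma cardA_interval (A : Finset U) {a b : U} (hA : a ∈ A) (hbA : b ∉ A) (hab : a < b) :
    (A.filter (fun t => a ≤ t ∧ t < b)).card + (A.filter (· ≤ a)).card
      = (A.filter (· ≤ b)).card + 1 := by
  have hu : A.filter (fun t => a ≤ t ∧ t < b) ∪ A.filter (· ≤ a) = A.filter (· ≤ b) := by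
    ext t
    simp only [Finset.mem_union, Finset.mem_filter]
    constructor
    · rintro (⟨ht, h1, h2⟩ | ⟨ht, h1⟩)
      · exact ⟨ht, le_of_lt h2⟩
      · exact ⟨ht, h1.trans hab.le⟩
    · rintro ⟨ht, h1⟩
      rcases le_or_gt t a with h | h
      · exact Or.inr ⟨ht, h⟩
      · refine Or.inl ⟨ht, h.le, lt_of_le_of_ne h1 ?_⟩
        rintro rfl; exact hbA ht
  have hi : A.filter (fun t => a ≤ t ∧ t < b) ∩ A.filter (· ≤ a) = {a} := by
    ext t
    simp only [Finset.mem_inter, Finset.mem_filter, Finset.mem_singleton]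
    constructor
    · rintro ⟨⟨_, h1, _⟩, _, h3⟩; exact le_antisymm h3 h1
    · rintro rfl; exact ⟨⟨hA, le_refl _, hab⟩, hA, le_refl _⟩
  have h := Finset.card_union_add_card_inter (A.filter (fun t => a ≤ t ∧ t < b))
    (A.filter (· ≤ a))
  rw [hu, hi] at h
  simp only [Finset.card_singleton] at h
  omega

lemma cardB_interval (B : Finset U) {a b : U} (hab : a < b) :
    (B.filter (fun t => a < t ∧ t ≤ b)).card + (B.filter (· ≤ a)).card
      = (B.filter (· ≤ b)).card := by
  have hu : B.filter (fun t => a < t ∧ t ≤ b) ∪ B.filter (· ≤ a) = B.filter (· ≤ b) := by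
    ext t
    simp only [Finset.mem_union, Finset.mem_filter]
    constructor
    · rintro (⟨ht, _, h2⟩ | ⟨ht, h1⟩)
      · exact ⟨ht, h2⟩
      · exact ⟨ht, h1.trans hab.le⟩
    · rintro ⟨ht, h1⟩
      rcases le_or_gt t a with h | h
      · exact Or.inr ⟨ht, h⟩
      · exact Or.inl ⟨ht, h, h1⟩
  have hd : Disjoint (B.filter (fun t => a < t ∧ t ≤ b)) (B.filter (· ≤ a)) := by
    rw [Finset.disjoint_left]
    rintro t ht ht'
    simp only [Finset.mem_filter] at ht ht'
    exact absurd ht'.2 (not_le.mpr ht.2.1)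
  rw [← Finset.card_union_of_disjoint hd, hu]

lemma counts_iff {A B : Finset U} {a b : U} (hA : a ∈ A) (hB : b ∈ B)
    (hAB : Disjoint A B) (hab : a < b) :
    ((A.filter (fun t => a ≤ t ∧ t < b)).card = (B.filter (fun t => a < t ∧ t ≤ b)).card)
      ↔ hgt A B b = hgt A B a - 1 := by
  have hbA : b ∉ A := fun hbA => (Finset.disjoint_left.mp hAB hbA) hB
  have h1 := cardA_interval A hA hbA hab
  have h2 := cardB_interval B hab
  unfold hgt
  constructor <;> intro h <;> omega

lemma filter_le_step_notMem (C : Finset U) {x p : U} (hpx : p < x)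
    (hbt : ∀ t ∈ C, t < x → t ≤ p) (hxC : x ∉ C) :
    C.filter (· ≤ x) = C.filter (· ≤ p) := by
  ext t
  simp only [Finset.mem_filter]
  constructor
  · rintro ⟨ht, h1⟩
    refine ⟨ht, hbt t ht (lt_of_le_of_ne h1 ?_)⟩
    rintro rfl; exact hxC ht
  · rintro ⟨ht, h1⟩; exact ⟨ht, h1.trans hpx.le⟩

lemma filter_le_step_mem (C : Finset U) {x p : U} (hpx : p < x)
    (hbt : ∀ t ∈ C, t < x → t ≤ p) (hxC : x ∈ C) :
    (C.filter (· ≤ x)).card = (C.filter (· ≤ p)).card + 1 := by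
  have he : C.filter (· ≤ x) = insert x (C.filter (· ≤ p)) := by
    ext t
    simp only [Finset.mem_filter, Finset.mem_insert]
    constructor
    · rintro ⟨ht, h1⟩
      rcases eq_or_lt_of_le h1 with h | h
      · exact Or.inl h
      · exact Or.inr ⟨ht, hbt t ht h⟩
    · rintro (rfl | ⟨ht, h1⟩)
      · exact ⟨hxC, le_refl _⟩
      · exact ⟨ht, h1.trans hpx.le⟩
  rw [he, Finset.card_insert_of_notMem]
  simp only [Finset.mem_filter, not_and]
  intro _; exact not_le.mpr hpx

lemma F_mono (C : Finset U) {s t : U} (h : s ≤ t) :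
    (C.filter (· ≤ s)).card ≤ (C.filter (· ≤ t)).card := by
  apply Finset.card_le_card
  intro x hx
  simp only [Finset.mem_filter] at hx ⊢
  exact ⟨hx.1, hx.2.trans h⟩

lemma exists_max (s : Finset U) (h : s.Nonempty) : ∃ m ∈ s, ∀ x ∈ s, x ≤ m :=
  ⟨s.max' h, s.max'_mem h, fun x hx => s.le_max' x hx⟩

lemma exists_min (s : Finset U) (h : s.Nonempty) : ∃ m ∈ s, ∀ x ∈ s, m ≤ x :=
  ⟨s.min' h, s.min'_mem h, fun x hx => s.min'_le x hx⟩

end OntoAux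

/-- `A ↠ B` (every element of `B` is paired under `π_{A→B}`) holds if and only
if for every `n`, `|{a ∈ A : a ≤ n}| ≥ |{b ∈ B : b ≤ n}|`. -/
theorem onto_pairing_iff_counts {U : Type*} [LinearOrder U] (A B : Finset U)
    (hAB : Disjoint A B) :
    (∀ b ∈ B, ∃ a, pairsWith A B a b) ↔ ontoC A B := by
  have hAe : A \ B = A := hAB.sdiff_eq_left
  have hBe : B \ A = B := hAB.symm.sdiff_eq_left
  have hnab : ∀ x, x ∈ A → x ∈ B → False := fun x hx hy =>
    Finset.disjoint_left.mp hAB hx hy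
  constructor
  · -- paired → counts
    intro hp n
    by_contra hc
    push_neg at hc
    have hSne : (B.filter (fun x => OntoAux.hgt A B x < 0)).Nonempty := by
      have hGn : 0 < (B.filter (· ≤ n)).card := by omega
      obtain ⟨b, hbmem, hbmax⟩ := OntoAux.exists_max _ (Finset.card_pos.mp hGn)
      simp only [Finset.mem_filter] at hbmem
      have hGeq : B.filter (· ≤ n) = B.filter (· ≤ b) := by
        ext t
        simp only [Finset.mem_filter]
        exact ⟨fun ⟨ht, h1⟩ => ⟨ht, hbmax t (Finset.mem_filter.mpr ⟨ht, h1⟩)⟩,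
          fun ⟨ht, h1⟩ => ⟨ht, h1.trans hbmem.2⟩⟩
      have hF := OntoAux.F_mono A hbmem.2
      refine ⟨b, Finset.mem_filter.mpr ⟨hbmem.1, ?_⟩⟩
      unfold OntoAux.hgt
      rw [← hGeq]
      omega
    obtain ⟨b₀, hb₀mem, hb₀min⟩ := OntoAux.exists_min _ hSne
    simp only [Finset.mem_filter] at hb₀mem
    obtain ⟨a, hpa⟩ := hp b₀ hb₀mem.1
    rcases hpa with ⟨hx, _⟩ | ⟨haAB, _, hab, hcnt, _⟩
    · rw [Finset.mem_inter] at hx; exact hnab a hx.1 hx.2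
    · rw [hAe] at haAB
      rw [hAe, hBe] at hcnt
      have hstep := (OntoAux.counts_iff haAB hb₀mem.1 hAB hab).mp hcnt
      have hFa : 0 < (A.filter (· ≤ a)).card :=
        Finset.card_pos.mpr ⟨a, Finset.mem_filter.mpr ⟨haAB, le_refl _⟩⟩
      have hGa : 0 < (B.filter (· ≤ a)).card := by
        have h1 := hb₀mem.2
        unfold OntoAux.hgt at hstep h1
        omega
      obtain ⟨b', hb'mem, hb'max⟩ := OntoAux.exists_max _ (Finset.card_pos.mp hGa)
      simp only [Finset.mem_filter] at hb'mem
      have hb'lt : b' < a :=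
        lt_of_le_of_ne hb'mem.2 (fun h => hnab a haAB (h ▸ hb'mem.1))
      have hGeq : B.filter (· ≤ a) = B.filter (· ≤ b') := by
        ext t
        simp only [Finset.mem_filter]
        exact ⟨fun ⟨ht, h1⟩ => ⟨ht, hb'max t (Finset.mem_filter.mpr ⟨ht, h1⟩)⟩,
          fun ⟨ht, h1⟩ => ⟨ht, h1.trans hb'mem.2⟩⟩
      have hFlt : (A.filter (· ≤ b')).card < (A.filter (· ≤ a)).card := by
        apply Finset.card_lt_card
        constructor
        · intro t ht
          simp only [Finset.mem_filter] at ht ⊢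
          exact ⟨ht.1, ht.2.trans hb'lt.le⟩
        · intro hsub
          have := hsub (Finset.mem_filter.mpr ⟨haAB, le_refl a⟩)
          simp only [Finset.mem_filter] at this
          exact absurd this.2 (not_le.mpr hb'lt)
      have hb'Sn : b' ∈ B.filter (fun x => OntoAux.hgt A B x < 0) := by
        refine Finset.mem_filter.mpr ⟨hb'mem.1, ?_⟩
        have h1 := hb₀mem.2
        unfold OntoAux.hgt at hstep h1 ⊢
        rw [← hGeq]
        omega
      have := hb₀min b' hb'Sn
      exact absurd (this.trans_lt (hb'lt.trans hab)) (lt_irrefl b₀)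
  · -- counts → paired
    intro hc b hb
    have hb0 : 0 ≤ OntoAux.hgt A B b := by
      have := hc b
      unfold OntoAux.hgt
      omega
    have hbA : b ∉ A := fun h => hnab b h hb
    have hPne : ((A ∪ B).filter (· < b)).Nonempty := by
      have hGb : 0 < (B.filter (· ≤ b)).card :=
        Finset.card_pos.mpr ⟨b, Finset.mem_filter.mpr ⟨hb, le_refl _⟩⟩
      have hFb : 0 < (A.filter (· ≤ b)).card := by
        have := hc b; omega
      obtain ⟨a', ha'⟩ := Finset.card_pos.mp hFb
      simp only [Finset.mem_filter] at ha'
      have : a' < b := lt_of_le_of_ne ha'.2 (fun h => hnab a' ha'.1 (h ▸ hb))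
      exact ⟨a', Finset.mem_filter.mpr ⟨Finset.mem_union_left _ ha'.1, this⟩⟩
    -- the last element tl of (A ∪ B) ∩ (-∞, b) has height hgt b + 1
    obtain ⟨tl, htlmem, htlmax⟩ := OntoAux.exists_max _ hPne
    simp only [Finset.mem_filter] at htlmem
    have htl_no_between : ∀ t ∈ A ∪ B, t < b → t ≤ tl :=
      fun t ht h => htlmax t (Finset.mem_filter.mpr ⟨ht, h⟩)
    have hFl : A.filter (· ≤ b) = A.filter (· ≤ tl) :=
      OntoAux.filter_le_step_notMem A htlmem.2
        (fun t ht h => htl_no_between t (Finset.mem_union_left _ ht) h) hbA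
    have hGl : (B.filter (· ≤ b)).card = (B.filter (· ≤ tl)).card + 1 :=
      OntoAux.filter_le_step_mem B htlmem.2
        (fun t ht h => htl_no_between t (Finset.mem_union_right _ ht) h) hb
    have htlh : OntoAux.hgt A B tl = OntoAux.hgt A B b + 1 := by
      unfold OntoAux.hgt
      rw [← hFl]
      omega
    -- Q : elements of (A∪B) ∩ (-∞,b) from which onwards height stays ≥ hgt b + 1
    have hQne : (((A ∪ B).filter (· < b)).filter
        (fun t => ∀ s ∈ A ∪ B, s < b → t ≤ s →
          OntoAux.hgt A B b + 1 ≤ OntoAux.hgt A B s)).Nonempty := by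
      refine ⟨tl, Finset.mem_filter.mpr
        ⟨Finset.mem_filter.mpr ⟨htlmem.1, htlmem.2⟩, ?_⟩⟩
      intro s hs hsb hls
      have : s = tl := le_antisymm (htl_no_between s hs hsb) hls
      rw [this, htlh]
    obtain ⟨a, haQ, hamin⟩ := OntoAux.exists_min _ hQne
    simp only [Finset.mem_filter] at haQ
    obtain ⟨⟨haAB', halt⟩, haprop⟩ := haQ
    -- key claim : a ∈ A and hgt a = hgt b + 1
    have hkey : a ∈ A ∧ OntoAux.hgt A B a = OntoAux.hgt A B b + 1 := by
      have hage : OntoAux.hgt A B b + 1 ≤ OntoAux.hgt A B a :=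
        haprop a haAB' halt (le_refl a)
      rcases ((A ∪ B).filter (· < a)).eq_empty_or_nonempty with hR | hRne
      · -- no element of A ∪ B below a
        have hno : ∀ t ∈ A ∪ B, ¬ t < a := by
          intro t ht h
          have : t ∈ (A ∪ B).filter (· < a) := Finset.mem_filter.mpr ⟨ht, h⟩
          rw [hR] at this
          exact absurd this (Finset.notMem_empty t)
        have hsubA : A.filter (· ≤ a) ⊆ {a} := by
          intro t ht
          simp only [Finset.mem_filter] at ht
          rcases eq_or_lt_of_le ht.2 with h | h
          · simp [h]
          · exact absurd h (hno t (Finset.mem_union_left _ ht.1))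
        have hsubB : B.filter (· ≤ a) ⊆ {a} := by
          intro t ht
          simp only [Finset.mem_filter] at ht
          rcases eq_or_lt_of_le ht.2 with h | h
          · simp [h]
          · exact absurd h (hno t (Finset.mem_union_right _ ht.1))
        have haA : a ∈ A := by
          rcases Finset.mem_union.mp haAB' with h | h
          · exact h
          · exfalso
            have hAempty : A.filter (· ≤ a) = ∅ := by
              rw [Finset.eq_empty_iff_forall_notMem]
              intro t ht
              have h2 := hsubA ht
              simp only [Finset.mem_singleton] at h2
              subst h2
              exact hnab t (Finset.mem_filter.mp ht).1 h
            have hBeq : B.filter (· ≤ a) = {a} := by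
              apply Finset.Subset.antisymm hsubB
              intro t ht
              simp only [Finset.mem_singleton] at ht
              subst ht
              exact Finset.mem_filter.mpr ⟨h, le_refl _⟩
            have := hc a
            rw [hAempty, hBeq] at this
            simp at this
        have hAeq : A.filter (· ≤ a) = {a} := by
          apply Finset.Subset.antisymm hsubA
          intro t ht
          simp only [Finset.mem_singleton] at ht
          subst ht
          exact Finset.mem_filter.mpr ⟨haA, le_refl _⟩
        have hBempty : B.filter (· ≤ a) = ∅ := by
          rw [Finset.eq_empty_iff_forall_notMem]
          intro t ht
          have h2 := hsubB ht
          simp only [Finset.mem_singleton] at h2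
          subst h2
          exact hnab t haA (Finset.mem_filter.mp ht).1
        have hha : OntoAux.hgt A B a = 1 := by
          unfold OntoAux.hgt
          rw [hAeq, hBempty]
          simp
        exact ⟨haA, by omega⟩
      · -- there is a predecessor p = max of (A∪B) ∩ (-∞, a)
        obtain ⟨p, hpmem, hpmax⟩ := OntoAux.exists_max _ hRne
        simp only [Finset.mem_filter] at hpmem
        obtain ⟨hpAB, hpa⟩ := hpmem
        have hno_between : ∀ t ∈ A ∪ B, t < a → t ≤ p :=
          fun t ht h => hpmax t (Finset.mem_filter.mpr ⟨ht, h⟩)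
        -- p fails the Q-property, so hgt p ≤ hgt b
        have hple : OntoAux.hgt A B p ≤ OntoAux.hgt A B b := by
          by_contra hcon
          push_neg at hcon
          have hpQ : p ∈ ((A ∪ B).filter (· < b)).filter
              (fun t => ∀ s ∈ A ∪ B, s < b → t ≤ s →
                OntoAux.hgt A B b + 1 ≤ OntoAux.hgt A B s) := by
            refine Finset.mem_filter.mpr
              ⟨Finset.mem_filter.mpr ⟨hpAB, hpa.trans halt⟩, ?_⟩
            intro s hs hsb hps
            rcases lt_or_ge s a with h | h
            · have h2 : s = p := le_antisymm (hno_between s hs h) hps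
              rw [h2]
              omega
            · exact haprop s hs hsb h
          have := hamin p hpQ
          exact absurd (this.trans_lt hpa) (lt_irrefl a)
        -- the step from p to a
        have haA : a ∈ A := by
          rcases Finset.mem_union.mp haAB' with h | h
          · exact h
          · exfalso
            have hFstep : A.filter (· ≤ a) = A.filter (· ≤ p) :=
              OntoAux.filter_le_step_notMem A hpa
                (fun t ht h' => hno_between t (Finset.mem_union_left _ ht) h')
                (fun h' => hnab a h' h)
            have hGstep : (B.filter (· ≤ a)).card = (B.filter (· ≤ p)).card + 1 :=
              OntoAux.filter_le_step_mem B hpa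
                (fun t ht h' => hno_between t (Finset.mem_union_right _ ht) h') h
            have hstep2 : OntoAux.hgt A B a = OntoAux.hgt A B p - 1 := by
              unfold OntoAux.hgt
              rw [hFstep]
              omega
            omega
        have hFstep : (A.filter (· ≤ a)).card = (A.filter (· ≤ p)).card + 1 :=
          OntoAux.filter_le_step_mem A hpa
            (fun t ht h' => hno_between t (Finset.mem_union_left _ ht) h') haA
        have hGstep : B.filter (· ≤ a) = B.filter (· ≤ p) :=
          OntoAux.filter_le_step_notMem B hpa
            (fun t ht h' => hno_between t (Finset.mem_union_right _ ht) h')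
            (fun h' => hnab a haA h')
        have hstep2 : OntoAux.hgt A B a = OntoAux.hgt A B p + 1 := by
          unfold OntoAux.hgt
          rw [hGstep]
          omega
        exact ⟨haA, by omega⟩
    obtain ⟨haA, hha⟩ := hkey
    refine ⟨a, Or.inr ?_⟩
    rw [hAe, hBe]
    refine ⟨haA, hb, halt, ?_, ?_⟩
    · exact (OntoAux.counts_iff haA hb hAB halt).mpr (by omega)
    · intro y' hy' hay' hcnt'
      have hy'h := (OntoAux.counts_iff haA hy' hAB hay').mp hcnt'
      by_contra hcon
      push_neg at hcon
      have := haprop y' (Finset.mem_union_right _ hy') hcon hay'.le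
      omega
end

section
/- Let λ be a partition, r ∈ ℤ/eℤ, A a set of indent r-nodes of λ and B a set of removable r-nodes of λ with |A| = |B|. If λ dominates the partition λ↑A↓B obtained by adding the nodes of A and removing the nodes of B, then A ↠ B with respect to the left-to-right order on r-nodes. -/
open scoped Classical

/-- Membership of the (0-indexed) node `(i, j)` in the Young diagram of `λ`. -/
def inDiag (l : PartitionSeq) (x : ℕ × ℕ) : Prop := x.2 < l.part x.1

/-- `(i, j)` is a removable node of `λ` (its removal leaves a partition). -/
def IsRemovable (l : PartitionSeq) (x : ℕ × ℕ) : Prop :=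
  0 < l.part x.1 ∧ x.2 = l.part x.1 - 1 ∧ l.part (x.1 + 1) < l.part x.1

/-- `(i, j)` is an indent (addable) node of `λ`. -/
def IsIndent (l : PartitionSeq) (x : ℕ × ℕ) : Prop :=
  x.2 = l.part x.1 ∧ (x.1 = 0 ∨ l.part x.1 < l.part (x.1 - 1))

/-- The `e`-residue of the node `(i, j)` (0-indexed): `j − i mod e`. -/
def resOf (e : ℕ) (x : ℕ × ℕ) : ZMod e := (x.2 : ZMod e) - (x.1 : ZMod e)

/-- If `A` is a set of indent `r`-nodes of `λ` and `B` a set of removable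
`r`-nodes with `|A| = |B|`, and `λ` dominates `λ↑A↓B`, then `A ↠ B` with
respect to the left-to-right (column) order on `r`-nodes. -/
theorem dominates_implies_onto (e : ℕ) (he : 2 ≤ e) (r : ZMod e)
    (l m : PartitionSeq) (A B : Finset (ℕ × ℕ))
    (hA : ∀ x ∈ A, IsIndent l x ∧ resOf e x = r)
    (hB : ∀ y ∈ B, IsRemovable l y ∧ resOf e y = r)
    (hcard : A.card = B.card)
    (hm : ∀ p : ℕ × ℕ, inDiag m p ↔ ((inDiag l p ∧ p ∉ B) ∨ p ∈ A))
    (hdom : dominates l m) :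
    ∀ n : ℕ, (B.filter (fun y => y.2 ≤ n)).card ≤ (A.filter (fun x => x.2 ≤ n)).card := by
  haveI : Fact (1 < e) := ⟨he⟩
  -- normal forms of nodes
  have hAnode : ∀ a ∈ A, a.2 = l.part a.1 := fun a ha => (hA a ha).1.1
  have hBnode : ∀ b ∈ B, 0 < l.part b.1 ∧ b.2 = l.part b.1 - 1 ∧
      l.part (b.1 + 1) < l.part b.1 := fun b hb => (hB b hb).1
  -- A and B occupy disjoint rows
  have hdisj : ∀ a ∈ A, ∀ b ∈ B, a.1 ≠ b.1 := by
    intro a ha b hb hab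
    obtain ⟨hpos, hb2, -⟩ := hBnode b hb
    have ha2 := hAnode a ha
    have hra := (hA a ha).2
    have hrb := (hB b hb).2
    obtain ⟨c, hc⟩ : ∃ c, l.part b.1 = c + 1 := ⟨l.part b.1 - 1, by omega⟩
    have h1 : resOf e a = ((c : ZMod e) + 1) - (b.1 : ZMod e) := by
      rw [resOf, ha2, hab, hc]; push_cast; ring
    have h2 : resOf e b = (c : ZMod e) - (b.1 : ZMod e) := by
      rw [resOf, hb2, hc]; simp
    have : (1 : ZMod e) = 0 := by
      have := h1.symm.trans (hra.trans (hrb.symm.trans h2))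
      have h3 : ((c : ZMod e) + 1) - (b.1 : ZMod e) - ((c : ZMod e) - (b.1 : ZMod e)) = 1 := by
        ring
      rw [this] at h3
      simp at h3
    exact one_ne_zero this
  -- each row contains determined candidate nodes
  have hAfib : ∀ i : ℕ, (A.filter (fun x => x.1 = i)).card =
      (if (i, l.part i) ∈ A then 1 else 0) := by
    intro i
    split_ifs with h
    · rw [Finset.card_eq_one]
      refine ⟨(i, l.part i), ?_⟩
      ext x
      simp only [Finset.mem_filter, Finset.mem_singleton]
      constructor
      · rintro ⟨hx, hx1⟩
        have := hAnode x hx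
        exact Prod.ext hx1 (by rw [this, hx1])
      · rintro rfl; exact ⟨h, rfl⟩
    · rw [Finset.card_eq_zero]
      ext x
      simp only [Finset.mem_filter, Finset.notMem_empty, iff_false, not_and]
      intro hx hx1
      exact h (by rw [← hx1, ← hAnode x hx]; exact hx)
  have hBfib : ∀ i : ℕ, (B.filter (fun y => y.1 = i)).card =
      (if (i, l.part i - 1) ∈ B then 1 else 0) := by
    intro i
    split_ifs with h
    · rw [Finset.card_eq_one]
      refine ⟨(i, l.part i - 1), ?_⟩
      ext y
      simp only [Finset.mem_filter, Finset.mem_singleton]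
      constructor
      · rintro ⟨hy, hy1⟩
        have := (hBnode y hy).2.1
        exact Prod.ext hy1 (by rw [this, hy1])
      · rintro rfl; exact ⟨h, rfl⟩
    · rw [Finset.card_eq_zero]
      ext y
      simp only [Finset.mem_filter, Finset.notMem_empty, iff_false, not_and]
      intro hy hy1
      exact h (by rw [← hy1, ← (hBnode y hy).2.1]; exact hy)
  -- row-wise relation between m and l
  have hmpart : ∀ i : ℕ, m.part i + (B.filter (fun y => y.1 = i)).card =
      l.part i + (A.filter (fun x => x.1 = i)).card := by
    intro i
    rw [hAfib, hBfib]
    by_cases hAi : (i, l.part i) ∈ A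
    · have hBi : (i, l.part i - 1) ∉ B := fun hBi => hdisj _ hAi _ hBi rfl
      have key : ∀ j : ℕ, j < m.part i ↔ j < l.part i + 1 := by
        intro j
        rw [show (j < m.part i) = inDiag m (i, j) from rfl, hm (i, j)]
        constructor
        · rintro (⟨hd, -⟩ | hA')
          · exact Nat.lt_succ_of_lt hd
          · have := hAnode _ hA'
            simp only at this
            omega
        · intro hj
          rcases Nat.lt_or_ge j (l.part i) with hj' | hj'
          · refine Or.inl ⟨hj', fun hjB => ?_⟩
            exact hdisj _ hAi _ hjB rfl
          · have : j = l.part i := by omega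
            subst this
            exact Or.inr hAi
      have h1 := key (m.part i)
      have h2 := key (l.part i + 1)
      simp only [if_pos hAi, if_neg hBi]
      omega
    · by_cases hBi : (i, l.part i - 1) ∈ B
      · have hpos : 0 < l.part i := by
          have := (hBnode _ hBi).1; simpa using this
        have key : ∀ j : ℕ, j < m.part i ↔ j < l.part i - 1 := by
          intro j
          rw [show (j < m.part i) = inDiag m (i, j) from rfl, hm (i, j)]
          constructor
          · rintro (⟨hd, hnB⟩ | hA')
            · have : j ≠ l.part i - 1 := fun hj => hnB (by rw [← hj] at hBi; exact hBi)
              have hd' : j < l.part i := hd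
              omega
            · exact absurd (hAnode _ hA' ▸ hA' : ((i, j).1, l.part (i,j).1) ∈ A)
                (by
                  have h2 := hAnode _ hA'
                  simp only at h2
                  intro _
                  exact hdisj _ hA' _ hBi rfl)
          · intro hj
            refine Or.inl ⟨show j < l.part i by omega, fun hjB => ?_⟩
            have := (hBnode _ hjB).2.1
            simp only at this
            omega
        have h1 := key (m.part i)
        have h2 := key (l.part i - 1)
        simp only [if_pos hBi, if_neg hAi]
        omega
      · have key : ∀ j : ℕ, j < m.part i ↔ j < l.part i := by
          intro j
          rw [show (j < m.part i) = inDiag m (i, j) from rfl, hm (i, j)]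
          constructor
          · rintro (⟨hd, -⟩ | hA')
            · exact hd
            · have h2 := hAnode _ hA'
              simp only at h2
              subst h2
              exact absurd hA' hAi
          · intro hj
            refine Or.inl ⟨hj, fun hjB => ?_⟩
            have h2 := (hBnode _ hjB).2.1
            simp only at h2
            subst h2
            exact hBi hjB
        have h1 := key (m.part i)
        have h2 := key (l.part i)
        simp only [if_neg hAi, if_neg hBi]
        omega
  -- counting fibers: card of row-filter as sum over rows
  have hfibsum : ∀ (S : Finset (ℕ × ℕ)) (k : ℕ),
      (S.filter (fun y => y.1 < k)).card =
        ∑ i ∈ Finset.range k, (S.filter (fun y => y.1 = i)).card := by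
    intro S k
    rw [Finset.card_eq_sum_card_fiberwise
      (f := Prod.fst) (t := Finset.range k)
      (fun x hx => Finset.mem_range.mpr (Finset.mem_filter.mp hx).2)]
    refine Finset.sum_congr rfl fun i hi => ?_
    congr 1
    rw [Finset.filter_filter]
    refine Finset.filter_congr fun y _ => ?_
    simp only [Finset.mem_range] at hi
    constructor
    · rintro ⟨-, h⟩; exact h
    · rintro rfl; exact ⟨hi, rfl⟩
  -- partial sum relation
  have hpsum : ∀ k : ℕ, psum m k + (B.filter (fun y => y.1 < k)).card =
      psum l k + (A.filter (fun x => x.1 < k)).card := by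
    intro k
    rw [hfibsum, hfibsum, psum, psum, ← Finset.sum_add_distrib, ← Finset.sum_add_distrib]
    exact Finset.sum_congr rfl fun i _ => hmpart i
  -- row domination
  have hrowdom : ∀ k : ℕ, (A.filter (fun x => x.1 < k)).card ≤
      (B.filter (fun y => y.1 < k)).card := by
    intro k
    have h1 := hpsum k
    have h2 := hdom.2 k
    omega
  -- main argument
  intro n
  by_cases hne : (B.filter (fun y => y.2 ≤ n)).Nonempty
  · obtain ⟨b₀, hb₀mem, hb₀min⟩ := Finset.exists_min_image _ (fun y => y.1) hne
    obtain ⟨hb₀B, hb₀n⟩ := Finset.mem_filter.mp hb₀mem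
    obtain ⟨hb₀pos, hb₀2, hb₀rem⟩ := hBnode b₀ hb₀B
    -- B with small columns = B with rows ≥ b₀.1
    have hBeq : B.filter (fun y => y.2 ≤ n) = B.filter (fun y => b₀.1 ≤ y.1) := by
      ext b
      simp only [Finset.mem_filter]
      constructor
      · rintro ⟨hb, hbn⟩
        exact ⟨hb, hb₀min b (Finset.mem_filter.mpr ⟨hb, hbn⟩)⟩
      · rintro ⟨hb, hbk⟩
        refine ⟨hb, ?_⟩
        obtain ⟨hpos, hb2, -⟩ := hBnode b hb
        have : l.part b.1 ≤ l.part b₀.1 := l.antitone' _ _ hbk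
        omega
    -- A with rows ≥ b₀.1 have small columns
    have hAsub : A.filter (fun x => b₀.1 ≤ x.1) ⊆ A.filter (fun x => x.2 ≤ n) := by
      intro a ha
      obtain ⟨haA, hak⟩ := Finset.mem_filter.mp ha
      refine Finset.mem_filter.mpr ⟨haA, ?_⟩
      have hne' : a.1 ≠ b₀.1 := hdisj a haA b₀ hb₀B
      have hk1 : b₀.1 + 1 ≤ a.1 := by omega
      have h1 : l.part a.1 ≤ l.part (b₀.1 + 1) := l.antitone' _ _ hk1
      have h2 := hAnode a haA
      omega
    -- card bookkeeping
    have hAsplit := Finset.card_filter_add_card_filter_not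
      (s := A) (p := fun x => x.1 < b₀.1)
    have hBsplit := Finset.card_filter_add_card_filter_not
      (s := B) (p := fun y => y.1 < b₀.1)
    have hAc : A.filter (fun x => ¬ x.1 < b₀.1) = A.filter (fun x => b₀.1 ≤ x.1) := by
      refine Finset.filter_congr fun x _ => ?_; simp [Nat.not_lt]
    have hBc : B.filter (fun y => ¬ y.1 < b₀.1) = B.filter (fun y => b₀.1 ≤ y.1) := by
      refine Finset.filter_congr fun y _ => ?_; simp [Nat.not_lt]
    rw [hAc] at hAsplit
    rw [hBc] at hBsplit
    have hsub := Finset.card_le_card hAsub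
    have hrd := hrowdom b₀.1
    rw [hBeq]
    omega
  · rw [Finset.not_nonempty_iff_eq_empty] at hne
    simp [hne]
end
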